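/- Let p ∈ ℕ^n and u_1, u_2 ∈ Λ_0^p with u_1 ≤ u_2 pointwise and u_1 ≠ u_2. Then Φ_t^0(u_1)(i) < Φ_t^0(u_2)(i) for every i ∈ ℤ^n and every t > 0. -/

import Mathlib

open Filter Topology

namespace FK

noncomputable section

abbrev Zn (n : ℕ) := Fin n → ℤ

variable {n : ℕ}

/-- the ℓ¹ norm `‖i‖ = ∑ |i_j|` on `ℤⁿ` -/
def znorm (i : Zn n) : ℕ := ∑ j, (i j).natAbs

/-- the finite ball `{j : ‖j - i‖ ≤ r}` as a `Finset` -/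
def ball (r : ℕ) (i : Zn n) : Finset (Zn n) :=
  (Finset.Icc (fun m => i m - (r : ℤ)) (fun m => i m + (r : ℤ))).filter fun j => znorm (j - i) ≤ r

/-- the shift `(shift j u) i = u (i + j)`, i.e. `τ_{-jₙ}ⁿ ⋯ τ_{-j₁}¹ u` -/
def shift (j : Zn n) (u : Zn n → ℝ) : Zn n → ℝ := fun i => u (i + j)

/-- the local potential `S_j(u) = s(τ_{-j} u)` -/
def Spot (s : (Zn n → ℝ) → ℝ) (j : Zn n) (u : Zn n → ℝ) : ℝ := s (shift j u)

/-- partial derivative `∂_i F(u)` of a functional `F` with respect to the coordinate `u(i)` -/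
def pd (F : (Zn n → ℝ) → ℝ) (i : Zn n) (u : Zn n → ℝ) : ℝ :=
  deriv (fun t => F (Function.update u i t)) (u i)

/-- second partial derivative `∂_{i,k} F(u)` -/
def pd2 (F : (Zn n → ℝ) → ℝ) (i k : Zn n) (u : Zn n → ℝ) : ℝ :=
  pd (fun w => pd F k w) i u

/-- the gradient field `W(u)(i) = ∑_{j : ‖j-i‖ ≤ r} ∂_i S_j(u)` -/
def grad (r : ℕ) (s : (Zn n → ℝ) → ℝ) (u : Zn n → ℝ) : Zn n → ℝ :=
  fun i => ∑ j ∈ ball r i, pd (Spot s j) i u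

/-- `u` is a solution of the Euler–Lagrange equation (EL):
`∑_{j : ‖j-i‖ ≤ r} ∂_i S_j(u) = 0` for all `i` -/
def IsSolution (r : ℕ) (s : (Zn n → ℝ) → ℝ) (u : Zn n → ℝ) : Prop :=
  ∀ i, grad r s u i = 0

/-- the standard basis vector `e_m` -/
def unitv (m : Fin n) : Zn n := fun m' => if m' = m then 1 else 0

/-- the first standard basis vector `e₁` -/
def e1v : Zn n := fun m => if (m : ℕ) = 0 then 1 else 0

/-- `u` has period `p m` in the `m`-th coordinate direction, for every `m` -/
def Periodic (p : Fin n → ℕ) (u : Zn n → ℝ) : Prop :=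
  ∀ (i : Zn n) (m : Fin n), u (i + (p m : ℤ) • unitv m) = u i

/-- `u` is `1`-periodic in every coordinate direction -/
def PeriodicAll (u : Zn n → ℝ) : Prop := Periodic (fun _ => 1) u

/-- `J_0(u) = S_0(u)` -/
def J0 (s : (Zn n → ℝ) → ℝ) (u : Zn n → ℝ) : ℝ := Spot s 0 u

/-- `c_0 = inf J_0` over fully periodic configurations -/
def c0 (s : (Zn n → ℝ) → ℝ) : ℝ := sInf {y | ∃ u, PeriodicAll u ∧ J0 s u = y}

/-- `M_0`, the set of fully periodic minimizers of `J_0` -/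
def M0 (s : (Zn n → ℝ) → ℝ) : Set (Zn n → ℝ) := {u | PeriodicAll u ∧ J0 s u = c0 s}

/-- the fundamental domain `T_0^p = ∏_j {0, …, p_j - 1}` -/
def Tbox (p : Fin n → ℕ) : Finset (Zn n) :=
  Finset.Icc 0 fun m => (p m : ℤ) - 1

/-- `J_0^p(u) = ∑_{j ∈ T_0^p} S_j(u)` -/
def J0p (s : (Zn n → ℝ) → ℝ) (p : Fin n → ℕ) (u : Zn n → ℝ) : ℝ :=
  ∑ j ∈ Tbox p, Spot s j u

/-- `c_0^p = inf J_0^p` over `Λ_0^p` -/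
def c0p (s : (Zn n → ℝ) → ℝ) (p : Fin n → ℕ) : ℝ :=
  sInf {y | ∃ u, Periodic p u ∧ J0p s p u = y}

/-- `I_0^p(u) = J_0^p(u + v_0)` -/
def I0p (s : (Zn n → ℝ) → ℝ) (p : Fin n → ℕ) (v0 u : Zn n → ℝ) : ℝ :=
  J0p s p (u + v0)

/-- the norm `‖u‖_{Λ_0^p} = (∑_{j ∈ T_0^p} |u(j)|²)^{1/2}` -/
def lamNorm (p : Fin n → ℕ) (u : Zn n → ℝ) : ℝ :=
  Real.sqrt (∑ j ∈ Tbox p, (u j) ^ 2)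

/-- `G_0^p = {u ∈ Λ_0^p : 0 ≤ u ≤ w_0 - v_0}` -/
def G0 (p : Fin n → ℕ) (v0 w0 : Zn n → ℝ) : Set (Zn n → ℝ) :=
  {u | Periodic p u ∧ 0 ≤ u ∧ u ≤ w0 - v0}

/-- the isometric identification of `Λ_0^p` with the euclidean space `ℝ^{T_0^p}` -/
def toEuc (p : Fin n → ℕ) (u : Zn n → ℝ) : EuclideanSpace ℝ (Tbox (n := n) p) :=
  WithLp.toLp 2 fun j => u j.1

/-- inverse of `toEuc`: extend values on `T_0^p` `p`-periodically -/
def extendP (p : Fin n → ℕ) (x : EuclideanSpace ℝ (Tbox (n := n) p)) : Zn n → ℝ :=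
  fun i => if h : (fun m => i m % (p m : ℤ)) ∈ Tbox p then x ⟨_, h⟩ else 0

/-- `I_0^p` read through the identification of `Λ_0^p` with euclidean space -/
def I0euc (s : (Zn n → ℝ) → ℝ) (p : Fin n → ℕ) (v0 : Zn n → ℝ) :
    EuclideanSpace ℝ (Tbox (n := n) p) → ℝ :=
  fun x => I0p s p v0 (extendP p x)

/-- `(I_0^p)'(u) = 0`: vanishing of the Fréchet derivative of `I_0^p` at `u`, computed through
the isometric identification of `Λ_0^p` with euclidean space -/
def IsCrit0 (s : (Zn n → ℝ) → ℝ) (p : Fin n → ℕ) (v0 : Zn n → ℝ) (u : Zn n → ℝ) : Prop :=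
  fderiv ℝ (I0euc s p v0) (toEuc p u) = 0

/-- membership in `H_0^p`: a norm-continuous path in `G_0^p` from `0` to `w_0 - v_0` -/
def PathIn (p : Fin n → ℕ) (v0 w0 : Zn n → ℝ) (h : ℝ → Zn n → ℝ) : Prop :=
  ContinuousOn (fun θ => toEuc p (h θ)) (Set.Icc 0 1) ∧
  (∀ θ ∈ Set.Icc (0 : ℝ) 1, h θ ∈ G0 p v0 w0) ∧
  h 0 = 0 ∧ h 1 = w0 - v0

/-- the mountain pass level `d_0^p = inf_{h ∈ H_0^p} max_{θ ∈ [0,1]} I_0^p(h(θ))` -/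
def d0p (s : (Zn n → ℝ) → ℝ) (p : Fin n → ℕ) (v0 w0 : Zn n → ℝ) : ℝ :=
  sInf {y | ∃ h, PathIn p v0 w0 h ∧
    y = sSup ((fun θ => I0p s p v0 (h θ)) '' Set.Icc 0 1)}

/-- `Φ` is the (negative gradient) semiflow of `I_0^p` on `Λ_0^p`:
`-∂_t Φ_t(u)(i) = ∑_{j : ‖j-i‖ ≤ r} ∂_i S_j(Φ_t(u) + v_0)`, `Φ_0(u) = u` -/
def IsFlow (r : ℕ) (s : (Zn n → ℝ) → ℝ) (p : Fin n → ℕ) (v0 : Zn n → ℝ)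
    (Φ : ℝ → (Zn n → ℝ) → (Zn n → ℝ)) : Prop :=
  (∀ u, Periodic p u → ∀ t, Periodic p (Φ t u)) ∧
  (∀ u, Φ 0 u = u) ∧
  (∀ u, Periodic p u → ∀ i, ∀ t ∈ Set.Ici (0 : ℝ),
    HasDerivWithinAt (fun τ => Φ τ u i) (-(grad r s (Φ t u + v0) i)) (Set.Ici 0) t)

/-- `p(k) = (k, 1, …, 1)` -/
def pk (n k : ℕ) : Fin n → ℕ := fun m => if (m : ℕ) = 0 then k else 1

/-- `u` touches `v` from below -/
def TouchesBelow (u v : Zn n → ℝ) : Prop := u ≤ v ∧ u ≠ v ∧ ∃ i, u i = v i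

/-- `θ̲_t = sup {θ ∈ [0,1] : Φ_t(h(θ)) ≤ u₀, Φ_t(h(θ)) ≠ u₀}` -/
def thetaLow (Φ : ℝ → (Zn n → ℝ) → (Zn n → ℝ)) (h : ℝ → Zn n → ℝ) (u0 : Zn n → ℝ)
    (t : ℝ) : ℝ :=
  sSup {θ | θ ∈ Set.Icc (0 : ℝ) 1 ∧ Φ t (h θ) ≤ u0 ∧ Φ t (h θ) ≠ u0}

/-- `θ̄_t = inf {θ ∈ [0,1] : Φ_t(h(θ)) ≥ u₀, Φ_t(h(θ)) ≠ u₀}` -/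
def thetaHigh (Φ : ℝ → (Zn n → ℝ) → (Zn n → ℝ)) (h : ℝ → Zn n → ℝ) (u0 : Zn n → ℝ)
    (t : ℝ) : ℝ :=
  sInf {θ | θ ∈ Set.Icc (0 : ℝ) 1 ∧ u0 ≤ Φ t (h θ) ∧ Φ t (h θ) ≠ u0}

/-- `s` read through the identification of `ℝ^{B_0^r}` with euclidean space (used to state that
`s ∈ C²(ℝ^{B_0^r}, ℝ)`) -/
def sEuc (r : ℕ) (s : (Zn n → ℝ) → ℝ) : EuclideanSpace ℝ (ball r (0 : Zn n)) → ℝ :=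
  fun x => s fun i => if h : i ∈ ball r (0 : Zn n) then x ⟨i, h⟩ else 0

/-- The standing assumptions on the generalized Frenkel–Kontorova model: `s ∈ C²(ℝ^{B_0^r}, ℝ)`
(encoded by `localized` and `smooth`) satisfying (S1)–(S4). -/
structure Setup (n r : ℕ) : Type where
  /-- the local potential -/
  s : (Zn n → ℝ) → ℝ
  npos : 0 < n
  /-- `s` only depends on the coordinates in `B_0^r` -/
  localized : ∀ u v : Zn n → ℝ, (∀ k, znorm k ≤ r → u k = v k) → s u = s v
  /-- `s` is `C²` -/
  smooth : ContDiff ℝ 2 (sEuc r s)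
  /-- (S1): periodicity -/
  S1 : ∀ u : Zn n → ℝ, s (fun i => u i + 1) = s u
  /-- (S2): bounded below -/
  S2_bddBelow : ∃ b : ℝ, ∀ u, b ≤ s u
  /-- (S2): coercivity -/
  S2_coercive : ∀ k j : Zn n, znorm k ≤ r → znorm j ≤ r → znorm (k - j) = 1 →
    ∀ M : ℝ, ∃ R : ℝ, ∀ u : Zn n → ℝ, R ≤ |u k - u j| → M ≤ s u
  /-- (S3): off-diagonal second partials nonpositive -/
  S3 : ∀ k j : Zn n, znorm k ≤ r → znorm j ≤ r → k ≠ j → ∀ u, pd2 s k j u ≤ 0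
  /-- (S3): strict negativity for nearest neighbours of `0` -/
  S3' : ∀ j : Zn n, znorm j = 1 → ∀ u, pd2 s 0 j u < 0
  /-- the constant of (S4) -/
  C : ℝ
  /-- (S4): uniformly bounded second partials -/
  S4 : ∀ i k : Zn n, znorm i ≤ r → znorm k ≤ r → ∀ u, |pd2 s i k u| ≤ C

/-- 1-periodicity in the directions `e_2, …, e_n` with periods `q` -/
def Periodic1 (q : Fin n → ℕ) (u : Zn n → ℝ) : Prop :=
  ∀ (i : Zn n) (m : Fin n), 1 ≤ (m : ℕ) → u (i + (q m : ℤ) • unitv m) = u i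

/-- the slab `{i} × T_1^q` as a `Finset` -/
def slab (q : Fin n → ℕ) (i : ℤ) : Finset (Zn n) :=
  Finset.Icc (fun m => if (m : ℕ) = 0 then i else 0)
    (fun m => if (m : ℕ) = 0 then i else (q m : ℤ) - 1)

/-- membership in `Λ_1^q` -/
def MemLam1 (q : Fin n → ℕ) (u : Zn n → ℝ) : Prop :=
  Periodic1 q u ∧ Summable fun i : ℤ => ∑ j ∈ slab q i, |u j|

/-- the norm `‖u‖_{Λ_1^q} = ∑_{ℤ × T_1^q} |u(j)| + (∑_{ℤ × T_1^q} |u(j)|²)^{1/2}` -/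
def lamNorm1 (q : Fin n → ℕ) (u : Zn n → ℝ) : ℝ :=
  (∑' i : ℤ, ∑ j ∈ slab q i, |u j|) + Real.sqrt (∑' i : ℤ, ∑ j ∈ slab q i, (u j) ^ 2)

/-- `J_1(u) = liminf_{p → -∞, q → ∞} ∑_{i=p}^q [J_0(τ^1_{-i} u) - c_0]` -/
def J1 (s : (Zn n → ℝ) → ℝ) (u : Zn n → ℝ) : ℝ :=
  liminf (fun pq : ℤ × ℤ => ∑ i ∈ Finset.Icc pq.1 pq.2, (Spot s (i • e1v) u - c0 s))
    (atBot ×ˢ atTop)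

/-- the class `Γ_1(v_0, w_0)` of heteroclinic configurations from `v_0` to `w_0` -/
def Gamma1 (v0 w0 : Zn n → ℝ) : Set (Zn n → ℝ) :=
  {u | Periodic1 (fun _ => 1) u ∧ v0 ≤ u ∧ u ≤ w0 ∧
    Tendsto (fun i : ℤ => u (i • e1v) - v0 (i • e1v)) atBot (nhds 0) ∧
    Tendsto (fun i : ℤ => u (i • e1v) - w0 (i • e1v)) atTop (nhds 0)}

/-- `c_1(v_0, w_0) = inf_{Γ_1(v_0,w_0)} J_1` -/
def c1 (s : (Zn n → ℝ) → ℝ) (v0 w0 : Zn n → ℝ) : ℝ :=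
  sInf {y | ∃ u ∈ Gamma1 v0 w0, J1 s u = y}

/-- `M_1(v_0, w_0)`, the minimizers of `J_1` on `Γ_1(v_0, w_0)` -/
def M1 (s : (Zn n → ℝ) → ℝ) (v0 w0 : Zn n → ℝ) : Set (Zn n → ℝ) :=
  {u | u ∈ Gamma1 v0 w0 ∧ J1 s u = c1 s v0 w0}

/-- `I_1^q(u) = liminf_{p → -∞, q' → ∞} ∑_{i=p}^{q'} ∑_{j ∈ {i} × T_1^q} [S_j(u + v_1) - c_0]` -/
def I1q (s : (Zn n → ℝ) → ℝ) (v1 : Zn n → ℝ) (q : Fin n → ℕ) (u : Zn n → ℝ) : ℝ :=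
  liminf (fun pq : ℤ × ℤ =>
      ∑ i ∈ Finset.Icc pq.1 pq.2, ∑ j ∈ slab q i, (Spot s j (u + v1) - c0 s))
    (atBot ×ˢ atTop)

/-- the pairing `(I_1^q)'(u) v = ∑_{i ∈ ℤ} ∑_{j ∈ {i} × T_1^q} v(j) ∑_{k : ‖k-j‖ ≤ r} ∂_j S_k(u + v_1)` -/
def pair1 (r : ℕ) (s : (Zn n → ℝ) → ℝ) (v1 : Zn n → ℝ) (q : Fin n → ℕ)
    (u v : Zn n → ℝ) : ℝ :=
  ∑' i : ℤ, ∑ j ∈ slab q i, v j * grad r s (u + v1) j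

/-- `(I_1^q)'(u) = 0` -/
def IsCrit1 (r : ℕ) (s : (Zn n → ℝ) → ℝ) (v1 : Zn n → ℝ) (q : Fin n → ℕ)
    (u : Zn n → ℝ) : Prop :=
  ∀ v, MemLam1 q v → pair1 r s v1 q u v = 0

/-- `G_1^q = {u ∈ Λ_1^q : 0 ≤ u ≤ w_1 - v_1}` -/
def G1 (q : Fin n → ℕ) (v1 w1 : Zn n → ℝ) : Set (Zn n → ℝ) :=
  {u | MemLam1 q u ∧ 0 ≤ u ∧ u ≤ w1 - v1}

/-- membership in `H_1^q`: a `‖·‖_{Λ_1^q}`-continuous path in `G_1^q` from `0` to `w_1 - v_1` -/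
def Path1 (q : Fin n → ℕ) (v1 w1 : Zn n → ℝ) (h : ℝ → Zn n → ℝ) : Prop :=
  (∀ θ ∈ Set.Icc (0 : ℝ) 1, h θ ∈ G1 q v1 w1) ∧ h 0 = 0 ∧ h 1 = w1 - v1 ∧
  ∀ θ ∈ Set.Icc (0 : ℝ) 1, ∀ ε > (0 : ℝ), ∃ δ > (0 : ℝ), ∀ θ' ∈ Set.Icc (0 : ℝ) 1,
    |θ' - θ| ≤ δ → lamNorm1 q (h θ' - h θ) ≤ ε

/-- the heteroclinic mountain pass level `d_1^q` -/
def d1q (s : (Zn n → ℝ) → ℝ) (v1 w1 : Zn n → ℝ) (q : Fin n → ℕ) : ℝ :=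
  sInf {y | ∃ h, Path1 q v1 w1 h ∧
    y = sSup ((fun θ => I1q s v1 q (h θ)) '' Set.Icc 0 1)}

/-- `q(k) = (k, 1, …, 1) ∈ ℕ^{n-1}` (indexed by the directions `e_2, …, e_n`) -/
def qk (n k : ℕ) : Fin n → ℕ := fun m => if (m : ℕ) = 1 then k else 1


variable {n r : ℕ}

lemma znorm_zero : znorm (0 : Zn n) = 0 := by simp [znorm]

lemma znorm_eq_zero {i : Zn n} (h : znorm i = 0) : i = 0 := by
  funext m
  have := Finset.sum_eq_zero_iff.mp h m (Finset.mem_univ m)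
  simpa [Int.natAbs_eq_zero] using this

lemma znorm_triangle (x y : Zn n) : znorm (x + y) ≤ znorm x + znorm y := by
  classical
  rw [znorm, znorm, znorm, ← Finset.sum_add_distrib]
  exact Finset.sum_le_sum fun m _ => by simpa using Int.natAbs_add_le (x m) (y m)

lemma znorm_unitv (m : Fin n) : znorm (unitv m) = 1 := by
  classical
  rw [znorm]
  unfold unitv
  rw [Finset.sum_congr rfl (fun x _ => show ((if x = m then 1 else 0:ℤ)).natAbs = if x = m then 1 else 0 by split <;> simp)]
  simp [Finset.sum_ite_eq']

lemma mem_ball_iff {i j : Zn n} : j ∈ ball r i ↔ znorm (j - i) ≤ r := by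
  classical
  constructor
  · intro h
    exact (Finset.mem_filter.mp h).2
  · intro h
    refine Finset.mem_filter.mpr ⟨Finset.mem_Icc.mpr ⟨?_, ?_⟩, h⟩ <;> intro m <;>
    · have h1 : (j m - i m).natAbs ≤ r :=
        le_trans (Finset.single_le_sum (f := fun m => ((j - i) m).natAbs)
          (fun _ _ => Nat.zero_le _) (Finset.mem_univ m)) h
      simp only [Pi.sub_apply] at h1 ⊢
      omega

lemma mem_ball_self (i : Zn n) : i ∈ ball r i := by
  simp [mem_ball_iff, znorm_zero]

lemma zero_mem_ball : (0 : Zn n) ∈ ball r (0 : Zn n) := mem_ball_self 0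

/-- projection onto the coordinates in `B_0^r` -/
def proj (r : ℕ) (v : Zn n → ℝ) : EuclideanSpace ℝ (ball r (0 : Zn n)) := WithLp.toLp 2 fun j => v j.1

lemma s_proj (P : Setup n r) (v : Zn n → ℝ) : P.s v = sEuc r P.s (proj r v) := by
  refine (P.localized _ _ fun k hk => ?_).symm
  have hk' : k ∈ ball r (0 : Zn n) := by simpa [mem_ball_iff] using hk
  simp [sEuc, proj, hk']

lemma proj_update {a : Zn n} (ha : a ∈ ball r (0 : Zn n)) (v : Zn n → ℝ) (t : ℝ) :
    proj r (Function.update v a t) = Function.update (proj r v) ⟨a, ha⟩ t := by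
  funext j
  rcases j with ⟨j, hj⟩
  by_cases h : j = a
  · subst h
    simp [proj, Function.update_apply]
  · simp [proj, Function.update_apply, h, Subtype.ext_iff]

lemma proj_update_notmem {a : Zn n} (ha : a ∉ ball r (0 : Zn n)) (v : Zn n → ℝ) (t : ℝ) :
    proj r (Function.update v a t) = proj r v := by
  ext j
  rcases j with ⟨j, hj⟩
  have : j ≠ a := fun h => ha (h ▸ hj)
  simp [proj, Function.update_apply, this]

/-- `Function.update`, typed on euclidean space -/
def updE (x : EuclideanSpace ℝ (ball r (0 : Zn n))) (a : ball r (0 : Zn n)) (t : ℝ) :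
    EuclideanSpace ℝ (ball r (0 : Zn n)) := WithLp.toLp 2 (Function.update x a t)

lemma update_hasDerivAt (x : EuclideanSpace ℝ (ball r (0 : Zn n))) (a : ball r (0 : Zn n))
    (t : ℝ) : HasDerivAt (fun t => updE x a t) (EuclideanSpace.single a 1) t := by
  have hfun : (fun t : ℝ => updE x a t)
      = fun t : ℝ => x + (t - x a) • EuclideanSpace.single a (1:ℝ) := by
    funext t
    ext j
    rw [PiLp.add_apply, PiLp.smul_apply, EuclideanSpace.single_apply]
    by_cases h : j = a
    · subst h; simp [updE, Function.update_apply]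
    · simp [updE, Function.update_apply, h]
  rw [hfun]
  simpa using ((((hasDerivAt_id t).sub_const (x a)).smul_const
    (EuclideanSpace.single a (1:ℝ)))).const_add x

lemma proj_update' {a : Zn n} (ha : a ∈ ball r (0 : Zn n)) (v : Zn n → ℝ) (t : ℝ) :
    proj r (Function.update v a t) = updE (proj r v) ⟨a, ha⟩ t :=
  congrArg (WithLp.toLp 2) (proj_update ha v t)

lemma sEuc_differentiable (P : Setup n r) : Differentiable ℝ (sEuc r P.s) :=
  P.smooth.differentiable (by norm_num)

lemma pd_eq (P : Setup n r) {a : Zn n} (ha : a ∈ ball r (0 : Zn n)) (v : Zn n → ℝ) :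
    pd P.s a v = fderiv ℝ (sEuc r P.s) (proj r v) (EuclideanSpace.single ⟨a, ha⟩ 1) := by
  have hcurve : ∀ t : ℝ, P.s (Function.update v a t) = sEuc r P.s (updE (proj r v) ⟨a, ha⟩ t) := by
    intro t
    rw [s_proj P, proj_update' ha]
  have hd : HasDerivAt (fun t => sEuc r P.s (updE (proj r v) ⟨a, ha⟩ t))
      (fderiv ℝ (sEuc r P.s) (updE (proj r v) ⟨a, ha⟩ (v a)) (EuclideanSpace.single ⟨a, ha⟩ 1))
      (v a) :=
    ((sEuc_differentiable P _).hasFDerivAt).comp_hasDerivAt (v a)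
      (update_hasDerivAt (proj r v) ⟨a, ha⟩ (v a))
  have hupdv : updE (proj r v) ⟨a, ha⟩ (v a) = proj r v := by
    have : (proj r v) ⟨a, ha⟩ = v a := rfl
    rw [updE, ← this, Function.update_eq_self]
  rw [hupdv] at hd
  rw [pd]
  rw [show (fun t => P.s (Function.update v a t))
      = fun t => sEuc r P.s (updE (proj r v) ⟨a, ha⟩ t) from funext hcurve]
  exact hd.deriv

lemma pd_of_not_mem (P : Setup n r) {a : Zn n} (ha : a ∉ ball r (0 : Zn n)) (v : Zn n → ℝ) :
    pd P.s a v = 0 := by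
  have : ∀ t : ℝ, P.s (Function.update v a t) = P.s v := by
    intro t
    refine P.localized _ _ fun k hk => ?_
    have : k ≠ a := fun h => ha (mem_ball_iff.mpr (by simpa using (h ▸ hk)))
    simp [Function.update_apply, this]
  rw [pd, show (fun t => P.s (Function.update v a t)) = fun _ => P.s v from funext this]
  simp

lemma pd_congr (P : Setup n r) (a : Zn n) {v w : Zn n → ℝ}
    (h : ∀ k, znorm k ≤ r → v k = w k) : pd P.s a v = pd P.s a w := by
  by_cases ha : a ∈ ball r (0 : Zn n)
  · rw [pd_eq P ha, pd_eq P ha]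
    have : proj r v = proj r w := by
      ext j
      refine h j.1 ?_
      have := mem_ball_iff.mp j.2
      simpa using this
    rw [this]
  · rw [pd_of_not_mem P ha, pd_of_not_mem P ha]

lemma fderiv_sEuc_differentiable (P : Setup n r) :
    Differentiable ℝ (fderiv ℝ (sEuc r P.s)) :=
  (P.smooth.fderiv_right (m := 1) (by norm_num)).differentiable (by norm_num)

/-- `pd s a` along a coordinate line: the key differentiability statement, with
derivative given by `pd2`. -/
lemma pd_update_hasDerivAt (P : Setup n r) (a b : Zn n) (v : Zn n → ℝ) (t : ℝ) :
    HasDerivAt (fun t => pd P.s a (Function.update v b t))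
      (pd2 P.s b a (Function.update v b t)) t := by
  have key : ∀ w : Zn n → ℝ, pd2 P.s b a w
      = deriv (fun t' => pd P.s a (Function.update w b t')) (w b) := by
    intro w
    simp only [pd2, pd]
  have main : DifferentiableAt ℝ (fun t => pd P.s a (Function.update v b t)) t := by
    by_cases hA : a ∈ ball r (0 : Zn n)
    · by_cases hB : b ∈ ball r (0 : Zn n)
      · have heq : (fun t => pd P.s a (Function.update v b t))
            = fun t => fderiv ℝ (sEuc r P.s) (updE (proj r v) ⟨b, hB⟩ t)
                (EuclideanSpace.single ⟨a, hA⟩ 1) := by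
          funext t
          rw [pd_eq P hA, proj_update' hB]
        rw [heq]
        have h1 : DifferentiableAt ℝ (fun t => updE (proj r v) ⟨b, hB⟩ t) t :=
          (update_hasDerivAt (proj r v) ⟨b, hB⟩ t).differentiableAt
        exact ((fderiv_sEuc_differentiable P).differentiableAt.comp t h1).clm_apply
          (differentiableAt_const _)
      · have heq : (fun t => pd P.s a (Function.update v b t)) = fun _ => pd P.s a v := by
          funext t
          rw [pd_eq P hA, pd_eq P hA, proj_update_notmem hB]
        rw [heq]; exact differentiableAt_const _
    · have heq : (fun t => pd P.s a (Function.update v b t)) = fun _ => (0:ℝ) := by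
        funext t
        rw [pd_of_not_mem P hA]
      rw [heq]; exact differentiableAt_const _
  have h2 : pd2 P.s b a (Function.update v b t)
      = deriv (fun t' => pd P.s a (Function.update v b t')) t := by
    rw [key (Function.update v b t)]
    have h3 : (fun t' => pd P.s a (Function.update (Function.update v b t) b t'))
        = fun t' => pd P.s a (Function.update v b t') := by
      funext t'
      rw [Function.update_idem]
    rw [h3, Function.update_self]
  rw [h2]
  exact main.hasDerivAt

lemma pd2_eq (P : Setup n r) {a b : Zn n} (ha : a ∈ ball r (0 : Zn n))
    (hb : b ∈ ball r (0 : Zn n)) (v : Zn n → ℝ) :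
    pd2 P.s a b v = fderiv ℝ (fderiv ℝ (sEuc r P.s)) (proj r v)
      (EuclideanSpace.single ⟨a, ha⟩ 1) (EuclideanSpace.single ⟨b, hb⟩ 1) := by
  have hcurve : (fun t => pd P.s b (Function.update v a t))
      = fun t => fderiv ℝ (sEuc r P.s) (updE (proj r v) ⟨a, ha⟩ t)
          (EuclideanSpace.single ⟨b, hb⟩ 1) := by
    funext t
    rw [pd_eq P hb, proj_update' ha]
  have hx : updE (proj r v) ⟨a, ha⟩ (v a) = proj r v := by
    have h0 : (proj r v) ⟨a, ha⟩ = v a := rfl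
    rw [updE, ← h0, Function.update_eq_self]
  have hd1 : HasDerivAt (fun t => fderiv ℝ (sEuc r P.s) (updE (proj r v) ⟨a, ha⟩ t))
      (fderiv ℝ (fderiv ℝ (sEuc r P.s)) (proj r v) (EuclideanSpace.single ⟨a, ha⟩ 1)) (v a) := by
    have := ((fderiv_sEuc_differentiable P) (updE (proj r v) ⟨a, ha⟩ (v a))).hasFDerivAt.comp_hasDerivAt
      (v a) (update_hasDerivAt (proj r v) ⟨a, ha⟩ (v a))
    rwa [hx] at this
  have hd2 := hd1.clm_apply (hasDerivAt_const (v a) (EuclideanSpace.single ⟨b, hb⟩ 1))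
  simp only [map_zero, add_zero] at hd2
  have : pd2 P.s a b v = deriv (fun t => pd P.s b (Function.update v a t)) (v a) := by
    simp only [pd2, pd]
  rw [this, hcurve]
  exact hd2.deriv

lemma pd2_symm (P : Setup n r) {a b : Zn n} (ha : a ∈ ball r (0 : Zn n))
    (hb : b ∈ ball r (0 : Zn n)) (v : Zn n → ℝ) :
    pd2 P.s a b v = pd2 P.s b a v := by
  rw [pd2_eq P ha hb, pd2_eq P hb ha]
  exact second_derivative_symmetric
    (fun y => ((sEuc_differentiable P) y).hasFDerivAt)
    ((fderiv_sEuc_differentiable P) (proj r v)).hasFDerivAt _ _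

lemma pd2_zero_right (P : Setup n r) {b : Zn n} (hb : b ∉ ball r (0 : Zn n))
    (a : Zn n) (v : Zn n → ℝ) : pd2 P.s a b v = 0 := by
  have : pd2 P.s a b v = deriv (fun t => pd P.s b (Function.update v a t)) (v a) := by
    simp only [pd2, pd]
  rw [this, show (fun t => pd P.s b (Function.update v a t)) = fun _ => (0:ℝ) from
    funext fun t => pd_of_not_mem P hb _]
  simp

lemma pd2_zero_left (P : Setup n r) {a : Zn n} (ha : a ∉ ball r (0 : Zn n))
    (b : Zn n) (v : Zn n → ℝ) : pd2 P.s a b v = 0 := by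
  by_cases hb : b ∈ ball r (0 : Zn n)
  · have : pd2 P.s a b v = deriv (fun t => pd P.s b (Function.update v a t)) (v a) := by
      simp only [pd2, pd]
    rw [this, show (fun t => pd P.s b (Function.update v a t)) = fun _ => pd P.s b v from
      funext fun t => by rw [pd_eq P hb, pd_eq P hb, proj_update_notmem ha]]
    simp
  · exact pd2_zero_right P hb a v

lemma C_nonneg (P : Setup n r) : 0 ≤ P.C :=
  le_trans (abs_nonneg _) (P.S4 0 0 (by simp [znorm_zero]) (by simp [znorm_zero]) 0)

lemma pd2_abs_le (P : Setup n r) (a b : Zn n) (v : Zn n → ℝ) : |pd2 P.s a b v| ≤ P.C := by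
  by_cases ha : a ∈ ball r (0 : Zn n)
  · by_cases hb : b ∈ ball r (0 : Zn n)
    · exact P.S4 a b (by simpa using mem_ball_iff.mp ha) (by simpa using mem_ball_iff.mp hb) v
    · rw [pd2_zero_right P hb]; simpa using C_nonneg P
  · rw [pd2_zero_left P ha]; simpa using C_nonneg P

lemma shift_update (j k : Zn n) (u : Zn n → ℝ) (t : ℝ) :
    shift j (Function.update u k t) = Function.update (shift j u) (k - j) t := by
  funext m
  simp only [shift, Function.update_apply]
  by_cases h : m + j = k
  · have h2 : m = k - j := by rw [← h]; ring
    simp [h, h2]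
  · have h2 : m ≠ k - j := fun hm => h (by rw [hm]; ring)
    simp [h, h2]

lemma pd_Spot (s : (Zn n → ℝ) → ℝ) (j i : Zn n) (u : Zn n → ℝ) :
    pd (Spot s j) i u = pd s (i - j) (shift j u) := by
  have h1 : (fun t => Spot s j (Function.update u i t))
      = fun t => s (Function.update (shift j u) (i - j) t) := by
    funext t
    rw [Spot, shift_update]
  have h2 : (shift j u) (i - j) = u i := by
    simp only [shift]
    congr 1
    ring
  rw [pd, pd, h1, h2]

lemma grad_eq (s : (Zn n → ℝ) → ℝ) (u : Zn n → ℝ) (i : Zn n) :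
    grad r s u i = ∑ j ∈ ball r i, pd s (i - j) (shift j u) := by
  rw [grad]
  exact Finset.sum_congr rfl fun j _ => pd_Spot s j i u

/-- coefficient of the derivative of `grad · i` along the coordinate line `k` -/
def Dcoef (r : ℕ) (s : (Zn n → ℝ) → ℝ) (i k : Zn n) (w : Zn n → ℝ) : ℝ :=
  ∑ j ∈ ball r i, pd2 s (k - j) (i - j) (shift j w)

lemma grad_update_hasDerivAt (P : Setup n r) (u : Zn n → ℝ) (i k : Zn n) (t : ℝ) :
    HasDerivAt (fun t => grad r P.s (Function.update u k t) i)
      (Dcoef r P.s i k (Function.update u k t)) t := by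
  have heq : (fun t => grad r P.s (Function.update u k t) i)
      = fun t => ∑ j ∈ ball r i, pd P.s (i - j) (Function.update (shift j u) (k - j) t) := by
    funext t
    rw [grad_eq]
    exact Finset.sum_congr rfl fun j _ => by rw [shift_update]
  rw [heq, Dcoef]
  have : ∀ j ∈ ball r i, HasDerivAt
      (fun t => pd P.s (i - j) (Function.update (shift j u) (k - j) t))
      (pd2 P.s (k - j) (i - j) (shift j (Function.update u k t))) t := by
    intro j _
    have := pd_update_hasDerivAt P (i - j) (k - j) (shift j u) t
    rwa [← shift_update] at this
  exact HasDerivAt.fun_sum this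

lemma znorm_neg (x : Zn n) : znorm (-x) = znorm x := by
  simp [znorm]

lemma znorm_sub_comm (x y : Zn n) : znorm (x - y) = znorm (y - x) := by
  rw [← znorm_neg (x - y), neg_sub]

lemma card_ball (i : Zn n) : (ball r i).card = (ball r (0 : Zn n)).card := by
  apply Finset.card_bij' (fun j _ => j - i) (fun j _ => j + i)
  · intro j hj
    rw [mem_ball_iff] at hj ⊢
    simpa using hj
  · intro j hj
    rw [mem_ball_iff] at hj ⊢
    simpa using hj
  · intro j _; ring
  · intro j _; ring

lemma Dcoef_abs_le (P : Setup n r) (i k : Zn n) (w : Zn n → ℝ) :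
    |Dcoef r P.s i k w| ≤ (ball r (0 : Zn n)).card * P.C := by
  rw [Dcoef]
  calc |∑ j ∈ ball r i, pd2 P.s (k - j) (i - j) (shift j w)|
      ≤ ∑ j ∈ ball r i, |pd2 P.s (k - j) (i - j) (shift j w)| := Finset.abs_sum_le_sum_abs _ _
    _ ≤ ∑ _j ∈ ball r i, P.C := Finset.sum_le_sum fun j _ => pd2_abs_le P _ _ _
    _ = (ball r (0 : Zn n)).card * P.C := by rw [Finset.sum_const, nsmul_eq_mul, card_ball]

lemma Dcoef_nonpos (P : Setup n r) {i k : Zn n} (hik : k ≠ i) (w : Zn n → ℝ) :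
    Dcoef r P.s i k w ≤ 0 := by
  rw [Dcoef]
  refine Finset.sum_nonpos fun j _ => ?_
  by_cases hk : znorm (k - j) ≤ r
  · by_cases hi : znorm (i - j) ≤ r
    · exact P.S3 _ _ hk hi (fun h => hik (by
        have := sub_left_injective.eq_iff.mp h
        exact this)) _
    · exact le_of_eq (pd2_zero_right P (fun hm => hi (by simpa using mem_ball_iff.mp hm)) _ _)
  · exact le_of_eq (pd2_zero_left P (fun hm => hk (by simpa using mem_ball_iff.mp hm)) _ _)

lemma Dcoef_neg (P : Setup n r) (hr : 1 ≤ r) {i k : Zn n} (hk1 : znorm (k - i) = 1)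
    (w : Zn n → ℝ) : Dcoef r P.s i k w < 0 := by
  have hik : k ≠ i := by
    intro h
    rw [h, sub_self, znorm_zero] at hk1
    exact one_ne_zero hk1.symm
  have hmem : i ∈ ball r i := mem_ball_self i
  have hki : (k - i) ∈ ball r (0 : Zn n) := by
    rw [mem_ball_iff]
    simpa [hk1] using hr
  have hterm : pd2 P.s (k - i) (i - i) (shift i w) < 0 := by
    rw [sub_self]
    rw [pd2_symm P hki zero_mem_ball]
    exact P.S3' _ hk1 _
  rw [Dcoef, ← Finset.add_sum_erase _ _ hmem]
  have hrest : ∑ j ∈ (ball r i).erase i, pd2 P.s (k - j) (i - j) (shift j w) ≤ 0 := by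
    refine Finset.sum_nonpos fun j hj => ?_
    by_cases hk : znorm (k - j) ≤ r
    · by_cases hi : znorm (i - j) ≤ r
      · exact P.S3 _ _ hk hi (fun h => hik (sub_left_injective.eq_iff.mp h)) _
      · exact le_of_eq (pd2_zero_right P (fun hm => hi (by simpa using mem_ball_iff.mp hm)) _ _)
    · exact le_of_eq (pd2_zero_left P (fun hm => hk (by simpa using mem_ball_iff.mp hm)) _ _)
  linarith

lemma grad_move_mvt (P : Setup n r) (u : Zn n → ℝ) (i k : Zn n) {t1 t2 : ℝ} (h : t1 < t2) :
    ∃ c : ℝ, grad r P.s (Function.update u k t2) i - grad r P.s (Function.update u k t1) i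
      = Dcoef r P.s i k (Function.update u k c) * (t2 - t1) := by
  obtain ⟨c, _, hc⟩ := exists_hasDerivAt_eq_slope
    (fun t => grad r P.s (Function.update u k t) i)
    (fun t => Dcoef r P.s i k (Function.update u k t)) h
    (fun t _ => (grad_update_hasDerivAt P u i k t).differentiableAt.continuousAt.continuousWithinAt)
    (fun t _ => grad_update_hasDerivAt P u i k t)
  refine ⟨c, ?_⟩
  rw [eq_div_iff (by linarith : t2 - t1 ≠ 0)] at hc
  linarith [hc]

lemma grad_move_le (P : Setup n r) (u : Zn n → ℝ) {i k : Zn n} (hki : k ≠ i) {t1 t2 : ℝ}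
    (h : t1 ≤ t2) :
    grad r P.s (Function.update u k t2) i ≤ grad r P.s (Function.update u k t1) i := by
  rcases eq_or_lt_of_le h with rfl | hlt
  · exact le_refl _
  · obtain ⟨c, hc⟩ := grad_move_mvt P u i k hlt
    nlinarith [Dcoef_nonpos P hki (Function.update u k c)]

lemma grad_move_lt (P : Setup n r) (hr : 1 ≤ r) (u : Zn n → ℝ) {i k : Zn n}
    (hk1 : znorm (k - i) = 1) {t1 t2 : ℝ} (h : t1 < t2) :
    grad r P.s (Function.update u k t2) i < grad r P.s (Function.update u k t1) i := by
  obtain ⟨c, hc⟩ := grad_move_mvt P u i k h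
  nlinarith [Dcoef_neg P hr hk1 (Function.update u k c)]

lemma grad_move_abs (P : Setup n r) (u : Zn n → ℝ) (i k : Zn n) (t1 t2 : ℝ) :
    |grad r P.s (Function.update u k t2) i - grad r P.s (Function.update u k t1) i|
      ≤ ((ball r (0 : Zn n)).card * P.C) * |t2 - t1| := by
  rcases lt_trichotomy t1 t2 with hlt | heq | hgt
  · obtain ⟨c, hc⟩ := grad_move_mvt P u i k hlt
    rw [hc, abs_mul]
    exact mul_le_mul_of_nonneg_right (Dcoef_abs_le P i k _) (abs_nonneg _)
  · rw [heq]; simp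
  · obtain ⟨c, hc⟩ := grad_move_mvt P u i k hgt
    rw [← abs_neg, neg_sub, hc, abs_mul, ← abs_neg (t1 - t2), neg_sub]
    exact mul_le_mul_of_nonneg_right (Dcoef_abs_le P i k _) (abs_nonneg _)

lemma grad_congr (P : Setup n r) (i : Zn n) {a b : Zn n → ℝ}
    (h : ∀ k ∈ ball (2 * r) i, a k = b k) : grad r P.s a i = grad r P.s b i := by
  rw [grad_eq, grad_eq]
  refine Finset.sum_congr rfl fun j hj => ?_
  refine pd_congr P _ (fun m hm => ?_)
  show a (m + j) = b (m + j)
  refine h _ (mem_ball_iff.mpr ?_)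
  calc znorm (m + j - i) = znorm (m + (j - i)) := by ring_nf
    _ ≤ znorm m + znorm (j - i) := znorm_triangle _ _
    _ ≤ r + r := Nat.add_le_add hm (mem_ball_iff.mp hj)
    _ = 2 * r := by ring

lemma grad_move_le' (P : Setup n r) (i k : Zn n) (a : Zn n → ℝ) (t : ℝ) (ρ : ℝ)
    (hρ : 0 ≤ ρ) (hup : k ≠ i → -ρ ≤ t - a k) (habs : k = i → |t - a k| ≤ ρ) :
    grad r P.s (Function.update a k t) i - grad r P.s a i
      ≤ ((ball r (0 : Zn n)).card * P.C) * ρ := by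
  have hCN : 0 ≤ ((ball r (0 : Zn n)).card : ℝ) * P.C :=
    mul_nonneg (Nat.cast_nonneg _) (C_nonneg P)
  have hbase : a = Function.update a k (a k) := (Function.update_eq_self k a).symm
  by_cases hki : k = i
  · have h1 := grad_move_abs P a i k (a k) t
    rw [← hbase] at h1
    have h2 := habs hki
    have := abs_le.mp h1
    nlinarith [abs_nonneg (t - a k), abs_le.mp h1]
  · rcases le_or_gt (a k) t with hle | hlt
    · have h1 := grad_move_le P a hki hle
      rw [← hbase] at h1
      nlinarith
    · have h1 := grad_move_abs P a i k (a k) t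
      rw [← hbase] at h1
      have h2 : |t - a k| ≤ ρ := by
        have := hup hki
        rw [abs_of_nonpos (by linarith)]
        linarith
      nlinarith [abs_le.mp h1]

lemma grad_tele (P : Setup n r) (i : Zn n) (ρ : ℝ) (hρ : 0 ≤ ρ) (E : Finset (Zn n)) :
    ∀ a b : Zn n → ℝ, (∀ k, k ∉ E → a k = b k) → (∀ k, -ρ ≤ b k - a k) →
    |b i - a i| ≤ ρ →
    grad r P.s b i - grad r P.s a i ≤ ((ball r (0 : Zn n)).card * P.C) * E.card * ρ := by
  classical
  induction E using Finset.induction_on with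
  | empty =>
    intro a b hout _ _
    have : a = b := funext fun k => hout k (Finset.notMem_empty k)
    rw [this]
    simp
  | @insert k E hkE ih =>
    intro a b hout hlow habs
    set a' := Function.update a k (b k) with ha'
    have hstep : grad r P.s a' i - grad r P.s a i ≤ ((ball r (0 : Zn n)).card * P.C) * ρ := by
      exact grad_move_le' P i k a (b k) ρ hρ (fun _ => hlow k)
        (fun hki => by rw [hki]; exact habs)
    have hrec : grad r P.s b i - grad r P.s a' i
        ≤ ((ball r (0 : Zn n)).card * P.C) * E.card * ρ := by
      refine ih a' b (fun m hm => ?_) (fun m => ?_) ?_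
      · by_cases hmk : m = k
        · subst hmk; simp [ha']
        · rw [ha', Function.update_apply, if_neg hmk]
          exact hout m (by simp [hmk, hm])
      · by_cases hmk : m = k
        · subst hmk; simp [ha', hρ]
        · rw [ha', Function.update_apply, if_neg hmk]
          exact hlow m
      · by_cases hik : i = k
        · subst hik; simp [ha', hρ]
        · rw [ha', Function.update_apply, if_neg hik]
          exact habs
    have hcard : ((insert k E).card : ℝ) = E.card + 1 := by
      rw [Finset.card_insert_of_notMem hkE]
      push_cast
      ring
    have hCN : 0 ≤ ((ball r (0 : Zn n)).card : ℝ) * P.C :=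
      mul_nonneg (Nat.cast_nonneg _) (C_nonneg P)
    rw [hcard]
    nlinarith

lemma grad_tele_mono (P : Setup n r) (i : Zn n) (E : Finset (Zn n)) :
    ∀ a b : Zn n → ℝ, (∀ k, k ∉ E → a k = b k) → a ≤ b → a i = b i →
    grad r P.s b i ≤ grad r P.s a i := by
  classical
  induction E using Finset.induction_on with
  | empty =>
    intro a b hout _ _
    rw [funext fun k => hout k (Finset.notMem_empty k)]
  | @insert k E hkE ih =>
    intro a b hout hab hiab
    set a' := Function.update a k (b k) with ha'
    have hstep : grad r P.s a' i ≤ grad r P.s a i := by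
      by_cases hki : k = i
      · subst hki
        rw [ha', ← hiab, Function.update_eq_self]
      · have hbase : a = Function.update a k (a k) := (Function.update_eq_self k a).symm
        have := grad_move_le P a hki (hab k)
        rwa [← hbase] at this
    have hrec : grad r P.s b i ≤ grad r P.s a' i := by
      refine ih a' b (fun m hm => ?_) (fun m => ?_) ?_
      · by_cases hmk : m = k
        · subst hmk; simp [ha']
        · rw [ha', Function.update_apply, if_neg hmk]
          exact hout m (by simp [hmk, hm])
      · by_cases hmk : m = k
        · subst hmk; simp [ha']
        · rw [ha', Function.update_apply, if_neg hmk]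
          exact hab m
      · by_cases hik : i = k
        · subst hik; simp [ha', hiab]
        · rw [ha', Function.update_apply, if_neg hik]
          exact hiab
    linarith

lemma grad_diff_le (P : Setup n r) (i : Zn n) (a b : Zn n → ℝ) (ρ : ℝ) (hρ : 0 ≤ ρ)
    (hlow : ∀ k, -ρ ≤ b k - a k) (hi : |b i - a i| ≤ ρ) :
    grad r P.s b i - grad r P.s a i
      ≤ ((ball r (0 : Zn n)).card * P.C) * (ball (2 * r) (0 : Zn n)).card * ρ := by
  classical
  set b' : Zn n → ℝ := fun k => if k ∈ ball (2 * r) i then b k else a k with hb'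
  have h1 : grad r P.s b' i = grad r P.s b i :=
    grad_congr P i (fun k hk => by simp [hb', hk])
  have h2 : grad r P.s b' i - grad r P.s a i
      ≤ ((ball r (0 : Zn n)).card * P.C) * (ball (2 * r) i).card * ρ := by
    refine grad_tele P i ρ hρ (ball (2 * r) i) a b' (fun k hk => by simp [hb', hk]) (fun k => ?_) ?_
    · by_cases hk : k ∈ ball (2 * r) i
      · simpa [hb', hk] using hlow k
      · simp [hb', hk, neg_nonpos.mpr hρ]
    · simpa [hb', mem_ball_self i] using hi
  rw [h1, card_ball (r := 2 * r) i] at h2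
  exact h2

lemma grad_mono_full (P : Setup n r) (i : Zn n) (a b : Zn n → ℝ) (hab : a ≤ b)
    (hi : a i = b i) : grad r P.s b i ≤ grad r P.s a i := by
  classical
  set b' : Zn n → ℝ := fun k => if k ∈ ball (2 * r) i then b k else a k with hb'
  have h1 : grad r P.s b' i = grad r P.s b i :=
    grad_congr P i (fun k hk => by simp [hb', hk])
  have h2 : grad r P.s b' i ≤ grad r P.s a i := by
    refine grad_tele_mono P i (ball (2 * r) i) a b' (fun k hk => by simp [hb', hk])
      (fun k => ?_) ?_
    · by_cases hk : k ∈ ball (2 * r) i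
      · simpa [hb', hk] using hab k
      · simp [hb', hk]
    · simpa [hb', mem_ball_self i] using hi
  rw [h1] at h2
  exact h2

lemma grad_strict_full (P : Setup n r) (hr : 1 ≤ r) {i k : Zn n} (hk1 : znorm (k - i) = 1)
    (a b : Zn n → ℝ) (hab : a ≤ b) (hi : a i = b i) (hk : a k < b k) :
    grad r P.s b i < grad r P.s a i := by
  have hki : k ≠ i := by
    intro h
    rw [h, sub_self, znorm_zero] at hk1
    exact one_ne_zero hk1.symm
  set c : Zn n → ℝ := Function.update b k (a k) with hc
  have h1 : grad r P.s b i < grad r P.s c i := by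
    have := grad_move_lt P hr b hk1 hk
    rwa [Function.update_eq_self] at this
  have h2 : grad r P.s c i ≤ grad r P.s a i := by
    refine grad_mono_full P i a c (fun m => ?_) ?_
    · by_cases hmk : m = k
      · subst hmk; simp [hc]
      · rw [hc, Function.update_apply, if_neg hmk]
        exact hab m
    · rw [hc, Function.update_apply, if_neg (fun h => hki h.symm)]
      exact hi
  linarith

lemma periodic_iterate {p : Fin n → ℕ} {u : Zn n → ℝ} (hu : Periodic p u) (i : Zn n)
    (m : Fin n) (c : ℤ) : u (i + (c * (p m : ℤ)) • unitv m) = u i := by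
  induction c using Int.induction_on with
  | zero => simp
  | succ c ih =>
    have harg : i + ((c + 1 : ℤ) * (p m : ℤ)) • unitv m
        = (i + (c * (p m : ℤ)) • unitv m) + (p m : ℤ) • unitv m := by
      rw [add_assoc, ← add_smul]
      ring_nf
    rw [harg, hu _ m, ih]
  | pred c ih =>
    have harg : (i + ((-c - 1 : ℤ) * (p m : ℤ)) • unitv m) + (p m : ℤ) • unitv m
        = i + ((-c : ℤ) * (p m : ℤ)) • unitv m := by
      rw [add_assoc, ← add_smul]
      ring_nf
    have := hu (i + ((-c - 1 : ℤ) * (p m : ℤ)) • unitv m) m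
    rw [harg] at this
    rw [← this, ih]

lemma periodic_sum {p : Fin n → ℕ} {u : Zn n → ℝ} (hu : Periodic p u) (i : Zn n)
    (S : Finset (Fin n)) (c : Fin n → ℤ) :
    u (i + ∑ m ∈ S, (c m * (p m : ℤ)) • unitv m) = u i := by
  classical
  induction S using Finset.induction_on with
  | empty => simp
  | @insert m S hmS ih =>
    rw [Finset.sum_insert hmS]
    have harg : i + ((c m * (p m : ℤ)) • unitv m + ∑ x ∈ S, (c x * (p x : ℤ)) • unitv x)
        = (i + ∑ x ∈ S, (c x * (p x : ℤ)) • unitv x) + (c m * (p m : ℤ)) • unitv m := by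
      abel
    rw [harg, periodic_iterate hu _ m, ih]

/-- the canonical representative of `i` in the fundamental domain -/
def repP (p : Fin n → ℕ) (i : Zn n) : Zn n := fun m => i m % (p m : ℤ)

lemma repP_mem_Tbox {p : Fin n → ℕ} (hp : ∀ m, 1 ≤ p m) (i : Zn n) : repP p i ∈ Tbox p := by
  rw [Tbox, Finset.mem_Icc]
  constructor <;> intro m
  · exact Int.emod_nonneg _ (by have := hp m; omega)
  · have h1 : i m % (p m : ℤ) < (p m : ℤ) :=
      Int.emod_lt_of_pos _ (by exact_mod_cast hp m)
    show i m % (p m : ℤ) ≤ (p m : ℤ) - 1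
    omega

lemma periodic_repP {p : Fin n → ℕ} {u : Zn n → ℝ} (hu : Periodic p u) (i : Zn n) :
    u i = u (repP p i) := by
  classical
  have hdecomp : i = repP p i + ∑ m ∈ Finset.univ, ((i m / (p m : ℤ)) * (p m : ℤ)) • unitv m := by
    funext m'
    have hsum : (∑ m ∈ Finset.univ, ((i m / (p m : ℤ)) * (p m : ℤ)) • unitv m) m'
        = (i m' / (p m' : ℤ)) * (p m' : ℤ) := by
      rw [Finset.sum_apply]
      have : ∀ m, (((i m / (p m : ℤ)) * (p m : ℤ)) • unitv m) m'
          = (i m / (p m : ℤ)) * (p m : ℤ) * (if m' = m then 1 else 0) := by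
        intro m
        simp [unitv]
      rw [Finset.sum_congr rfl fun m _ => this m]
      simp [Finset.sum_ite_eq']
    rw [Pi.add_apply, hsum]
    show i m' = i m' % (p m' : ℤ) + _
    have := Int.emod_add_mul_ediv (i m') ((p m' : ℤ))
    linarith [this]
  conv_lhs => rw [hdecomp]
  exact periodic_sum hu (repP p i) Finset.univ _

lemma zero_mem_Tbox {p : Fin n → ℕ} (hp : ∀ m, 1 ≤ p m) : (0 : Zn n) ∈ Tbox p := by
  rw [Tbox, Finset.mem_Icc]
  constructor <;> intro m
  · exact le_refl 0
  · show (0:ℤ) ≤ (p m : ℤ) - 1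
    have := hp m
    omega

lemma r_pos (P : Setup n r) : 1 ≤ r := by
  by_contra h
  have hr0 : r = 0 := by omega
  subst hr0
  have m : Fin n := ⟨0, P.npos⟩
  have hj : znorm (unitv m) = 1 := znorm_unitv m
  have hnot : unitv m ∉ ball 0 (0 : Zn n) := by
    rw [mem_ball_iff]
    simp [hj]
  have hz : pd2 P.s 0 (unitv m) 0 = 0 := by
    have h1 : (fun w => pd P.s (unitv m) w) = fun _ : Zn n → ℝ => (0:ℝ) :=
      funext fun w => pd_of_not_mem P hnot w
    show pd (fun w => pd P.s (unitv m) w) 0 0 = 0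
    rw [h1, pd]
    simp
  linarith [P.S3' (unitv m) hj 0]

section Flow

variable {P : Setup n r} {v0 : Zn n → ℝ} {p : Fin n → ℕ} {Φ : ℝ → (Zn n → ℝ) → (Zn n → ℝ)}
  {u1 u2 : Zn n → ℝ}

lemma flow_deriv (hΦ : IsFlow r P.s p v0 Φ) (h1 : Periodic p u1) (h2 : Periodic p u2)
    (k : Zn n) {τ : ℝ} (hτ : 0 ≤ τ) :
    HasDerivWithinAt (fun σ => Φ σ u2 k - Φ σ u1 k)
      (grad r P.s (Φ τ u1 + v0) k - grad r P.s (Φ τ u2 + v0) k) (Set.Ici 0) τ := by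
  have h := (hΦ.2.2 u2 h2 k τ hτ).sub (hΦ.2.2 u1 h1 k τ hτ)
  have : -grad r P.s (Φ τ u2 + v0) k - -grad r P.s (Φ τ u1 + v0) k
      = grad r P.s (Φ τ u1 + v0) k - grad r P.s (Φ τ u2 + v0) k := by ring
  rwa [this] at h

lemma flow_cont (hΦ : IsFlow r P.s p v0 Φ) (h1 : Periodic p u1) (h2 : Periodic p u2)
    (k : Zn n) : ContinuousOn (fun σ => Φ σ u2 k - Φ σ u1 k) (Set.Ici 0) :=
  fun τ hτ => (flow_deriv hΦ h1 h2 k hτ).continuousWithinAt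

lemma g_periodic (hΦ : IsFlow r P.s p v0 Φ) (h1 : Periodic p u1) (h2 : Periodic p u2)
    (τ : ℝ) : Periodic p (fun k => Φ τ u2 k - Φ τ u1 k) := by
  intro i m
  have ha := hΦ.1 u2 h2 τ i m
  have hb := hΦ.1 u1 h1 τ i m
  simp only [ha, hb]

lemma weak_comparison (hΦ : IsFlow r P.s p v0 Φ) (hp : ∀ m, 1 ≤ p m)
    (h1 : Periodic p u1) (h2 : Periodic p u2) (hle : u1 ≤ u2) :
    ∀ τ : ℝ, 0 ≤ τ → ∀ k, Φ τ u1 k ≤ Φ τ u2 k := by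
  classical
  set g : ℝ → Zn n → ℝ := fun σ k => Φ σ u2 k - Φ σ u1 k with hgdef
  set N : ℝ := ((ball r (0 : Zn n)).card : ℝ) * P.C with hN
  set M : ℝ := ((ball (2 * r) (0 : Zn n)).card : ℝ) with hM
  set K : ℝ := N * M + 1 with hK
  have hN0 : 0 ≤ N := mul_nonneg (Nat.cast_nonneg _) (C_nonneg P)
  have hM0 : 0 ≤ M := Nat.cast_nonneg _
  have hK1 : N * M < K := by rw [hK]; linarith
  have hKpos : 0 < K := by nlinarith
  -- main claim with the exponential shift
  have main : ∀ δ : ℝ, 0 < δ → ∀ τ : ℝ, 0 ≤ τ → ∀ k, -δ * Real.exp (K * τ) ≤ g τ k := by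
    intro δ hδ τ0 hτ0 k0
    by_contra hcon
    push_neg at hcon
    -- the bad set
    set A : Set ℝ := {t | t ∈ Set.Icc 0 τ0 ∧
      ∃ k ∈ Tbox p, g t k + δ * Real.exp (K * t) ≤ 0} with hA
    have hArep : ∀ t k, g t k = g t (repP p k) := fun t k =>
      periodic_repP (g_periodic hΦ h1 h2 t) k
    have hAne : A.Nonempty := by
      refine ⟨τ0, ⟨hτ0, le_refl τ0⟩, repP p k0, repP_mem_Tbox hp k0, ?_⟩
      rw [← hArep]
      linarith
    have hAbdd : BddBelow A := ⟨0, fun t ht => ht.1.1⟩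
    have hAclosed : IsClosed A := by
      have hrepr : A = ⋃ k ∈ (Tbox p : Set (Zn n)),
          (Set.Icc 0 τ0 ∩ (fun t => g t k + δ * Real.exp (K * t)) ⁻¹' Set.Iic 0) := by
        ext t
        simp only [hA, Set.mem_setOf_eq, Set.mem_iUnion, Set.mem_inter_iff, Set.mem_preimage,
          Set.mem_Iic, Finset.mem_coe, exists_prop]
        tauto
      rw [hrepr]
      refine Set.Finite.isClosed_biUnion (Tbox p).finite_toSet (fun k _ => ?_)
      refine ContinuousOn.preimage_isClosed_of_isClosed ?_ isClosed_Icc isClosed_Iic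
      have hc2 : Continuous fun t : ℝ => δ * Real.exp (K * t) :=
        continuous_const.mul (Real.continuous_exp.comp (continuous_const.mul continuous_id))
      exact ((flow_cont hΦ h1 h2 k).mono Set.Icc_subset_Ici_self).add hc2.continuousOn
    set T0 : ℝ := sInf A with hT0
    have hT0A : T0 ∈ A := hAclosed.csInf_mem hAne hAbdd
    obtain ⟨hT0mem, k1, hk1T, hφT0⟩ := hT0A
    have hg0 : ∀ k, 0 ≤ g 0 k := by
      intro k
      have := hle k
      simp [hgdef, hΦ.2.1 u1, hΦ.2.1 u2]
      linarith
    have hT0pos : 0 < T0 := by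
      rcases eq_or_lt_of_le hT0mem.1 with h0 | h0
      · exfalso
        rw [← h0] at hφT0
        have := hg0 k1
        simp only [mul_zero, Real.exp_zero, mul_one] at hφT0
        linarith
      · exact h0
    have hbelow : ∀ t, 0 ≤ t → t < T0 → ∀ k, 0 < g t k + δ * Real.exp (K * t) := by
      intro t h0t htT0 k
      have htA : t ∉ A := notMem_of_lt_csInf htT0 hAbdd
      have htIcc : t ∈ Set.Icc 0 τ0 := ⟨h0t, htT0.le.trans hT0mem.2⟩
      rw [hArep t k]
      by_contra hcc
      push_neg at hcc
      exact htA ⟨htIcc, repP p k, repP_mem_Tbox hp k, hcc⟩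
    have hneIco : (𝓝[Set.Ico 0 T0] T0).NeBot := by
      refine mem_closure_iff_nhdsWithin_neBot.mp ?_
      rw [closure_Ico (ne_of_lt hT0pos)]
      exact ⟨hT0pos.le, le_refl T0⟩
    have hatT0 : ∀ k, 0 ≤ g T0 k + δ * Real.exp (K * T0) := by
      intro k
      have hcw : ContinuousWithinAt (fun t => g t k + δ * Real.exp (K * t)) (Set.Ico 0 T0) T0 := by
        refine ContinuousWithinAt.mono ?_ (fun x hx => hx.1)
        have hc2 : Continuous fun t : ℝ => δ * Real.exp (K * t) :=
          continuous_const.mul (Real.continuous_exp.comp (continuous_const.mul continuous_id))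
        exact ((flow_cont hΦ h1 h2 k) T0 hT0pos.le).add hc2.continuousWithinAt
      refine ge_of_tendsto hcw ?_
      exact eventually_nhdsWithin_of_forall (fun t ht => (hbelow t ht.1 ht.2 k).le)
    have heq : g T0 k1 + δ * Real.exp (K * T0) = 0 := le_antisymm hφT0 (hatT0 k1)
    -- the derivative of the touching function at `T0`
    set d : ℝ := grad r P.s (Φ T0 u1 + v0) k1 - grad r P.s (Φ T0 u2 + v0) k1 with hd
    have hexp : HasDerivAt (fun t => δ * Real.exp (K * t)) (δ * (Real.exp (K * T0) * K)) T0 := by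
      have h' : HasDerivAt (fun t => Real.exp (K * t)) (Real.exp (K * T0) * K) T0 := by
        simpa [Function.comp_def] using (Real.hasDerivAt_exp (K * T0)).comp T0 ((hasDerivAt_id T0).const_mul K)
      exact h'.const_mul δ
    have hder : HasDerivWithinAt (fun t => g t k1 + δ * Real.exp (K * t))
        (d + δ * (Real.exp (K * T0) * K)) (Set.Ici 0) T0 :=
      (flow_deriv hΦ h1 h2 k1 hT0pos.le).add hexp.hasDerivWithinAt
    have hdiff : Set.Icc 0 T0 \ {T0} = Set.Ico 0 T0 := by
      ext t
      simp only [Set.mem_diff, Set.mem_Icc, Set.mem_singleton_iff, Set.mem_Ico]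
      constructor
      · rintro ⟨⟨h0, hT⟩, hne⟩; exact ⟨h0, lt_of_le_of_ne hT hne⟩
      · rintro ⟨h0, hT⟩; exact ⟨⟨h0, hT.le⟩, ne_of_lt hT⟩
    have hslope : d + δ * (Real.exp (K * T0) * K) ≤ 0 := by
      have hd2 := hder.mono (Set.Icc_subset_Ici_self : Set.Icc (0:ℝ) T0 ⊆ Set.Ici 0)
      rw [hasDerivWithinAt_iff_tendsto_slope, hdiff] at hd2
      refine le_of_tendsto hd2 (eventually_nhdsWithin_of_forall (fun t ht => ?_))
      rw [slope_def_field]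
      have hnum : 0 ≤ (g t k1 + δ * Real.exp (K * t)) - (g T0 k1 + δ * Real.exp (K * T0)) := by
        rw [heq]
        linarith [hbelow t ht.1 ht.2 k1]
      have hden : t - T0 < 0 := by linarith [ht.2]
      exact div_nonpos_of_nonneg_of_nonpos hnum hden.le
    -- contradiction with the gradient estimate
    set ρ : ℝ := δ * Real.exp (K * T0) with hρdef
    have hρpos : 0 < ρ := mul_pos hδ (Real.exp_pos _)
    set a : Zn n → ℝ := Φ T0 u1 + v0 with ha
    set b : Zn n → ℝ := Φ T0 u2 + v0 with hb
    have hba : ∀ k, b k - a k = g T0 k := by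
      intro k
      simp [ha, hb, hgdef]
    have hlow : ∀ k, -ρ ≤ b k - a k := by
      intro k
      rw [hba k]
      linarith [hatT0 k]
    have hik1 : |b k1 - a k1| ≤ ρ := by
      rw [hba k1]
      have : g T0 k1 = -ρ := by rw [hρdef]; linarith
      rw [this, abs_neg, abs_of_pos hρpos]
    have hest := grad_diff_le P k1 a b ρ hρpos.le hlow hik1
    have hdlow : -(N * M * ρ) ≤ d := by
      have hNM : N * M * ρ
          = ↑(ball r (0:Zn n)).card * P.C * ↑(ball (2 * r) (0:Zn n)).card * ρ := by
        rw [hN, hM]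
      rw [hd, hNM]
      linarith
    have hKρ : δ * (Real.exp (K * T0) * K) = K * ρ := by rw [hρdef]; ring
    rw [hKρ] at hslope
    nlinarith
  -- conclude
  intro τ hτ k
  by_contra hcon
  push_neg at hcon
  have hg : g τ k < 0 := by simp [hgdef]; linarith
  have hδ : 0 < -g τ k / (2 * Real.exp (K * τ)) := by
    apply div_pos (by linarith) (by positivity)
  have hmm := main _ hδ τ hτ k
  have he : (0:ℝ) < Real.exp (K * τ) := Real.exp_pos _
  have h2 : -(-g τ k / (2 * Real.exp (K * τ))) * Real.exp (K * τ) = g τ k / 2 := by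
    field_simp
  rw [h2] at hmm
  linarith

end Flow

lemma grad_diff_le_diag (P : Setup n r) (k : Zn n) (a b : Zn n → ℝ) (hab : a ≤ b) :
    grad r P.s b k - grad r P.s a k
      ≤ ((ball r (0 : Zn n)).card * P.C) * (b k - a k) := by
  set a' : Zn n → ℝ := Function.update a k (b k) with ha'
  have h1 : |grad r P.s a' k - grad r P.s a k|
      ≤ ((ball r (0 : Zn n)).card * P.C) * |b k - a k| := by
    have := grad_move_abs P a k k (a k) (b k)
    rwa [Function.update_eq_self] at this
  have h2 : grad r P.s b k ≤ grad r P.s a' k := by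
    refine grad_mono_full P k a' b (fun m => ?_) ?_
    · by_cases hmk : m = k
      · subst hmk; simp [ha']
      · rw [ha', Function.update_apply, if_neg hmk]; exact hab m
    · simp [ha']
  have h3 : |b k - a k| = b k - a k := abs_of_nonneg (by linarith [hab k])
  rw [h3] at h1
  have := abs_le.mp h1
  linarith [this.2]

section Flow2

variable {P : Setup n r} {v0 : Zn n → ℝ} {p : Fin n → ℕ} {Φ : ℝ → (Zn n → ℝ) → (Zn n → ℝ)}
  {u1 u2 : Zn n → ℝ}

lemma g_zero_on_past (hΦ : IsFlow r P.s p v0 Φ) (hp : ∀ m, 1 ≤ p m)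
    (h1 : Periodic p u1) (h2 : Periodic p u2) (hle : u1 ≤ u2)
    {t0 : ℝ} (ht0 : 0 ≤ t0) {i : Zn n} (hzero : Φ t0 u1 i = Φ t0 u2 i) :
    ∀ τ, 0 ≤ τ → τ ≤ t0 → Φ τ u1 i = Φ τ u2 i := by
  have hwc := weak_comparison hΦ hp h1 h2 hle
  set N : ℝ := ((ball r (0 : Zn n)).card : ℝ) * P.C with hN
  have hN0 : 0 ≤ N := mul_nonneg (Nat.cast_nonneg _) (C_nonneg P)
  set h : ℝ → ℝ := fun τ => Real.exp (N * τ) * (Φ τ u2 i - Φ τ u1 i) with hh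
  have hmono : MonotoneOn h (Set.Icc 0 t0) := by
    refine monotoneOn_of_hasDerivWithinAt_nonneg (convex_Icc 0 t0) ?_
      (f' := fun x => Real.exp (N * x) * N * (Φ x u2 i - Φ x u1 i)
        + Real.exp (N * x) * (grad r P.s (Φ x u1 + v0) i - grad r P.s (Φ x u2 + v0) i))
      (fun x hx => ?_) (fun x hx => ?_)
    · have hc2 : Continuous fun t : ℝ => Real.exp (N * t) :=
        Real.continuous_exp.comp (continuous_const.mul continuous_id)
      exact (hc2.continuousOn.mul ((flow_cont hΦ h1 h2 i).mono Set.Icc_subset_Ici_self))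
    · rw [interior_Icc] at hx
      have hgd : HasDerivAt (fun σ => Φ σ u2 i - Φ σ u1 i)
          (grad r P.s (Φ x u1 + v0) i - grad r P.s (Φ x u2 + v0) i) x :=
        (flow_deriv hΦ h1 h2 i hx.1.le).hasDerivAt (Ici_mem_nhds hx.1)
      have hexp : HasDerivAt (fun σ => Real.exp (N * σ)) (Real.exp (N * x) * N) x := by
        simpa [Function.comp_def] using (Real.hasDerivAt_exp (N * x)).comp x ((hasDerivAt_id x).const_mul N)
      exact ((hexp.mul hgd).hasDerivWithinAt).mono interior_subset
    · rw [interior_Icc] at hx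
      have hg : 0 ≤ Φ x u2 i - Φ x u1 i := by linarith [hwc x hx.1.le i]
      have hab : (Φ x u1 + v0) ≤ (Φ x u2 + v0) := fun k => by
        simp only [Pi.add_apply]
        linarith [hwc x hx.1.le k]
      have hdiag := grad_diff_le_diag P i (Φ x u1 + v0) (Φ x u2 + v0) hab
      have hba : (Φ x u2 + v0) i - (Φ x u1 + v0) i = Φ x u2 i - Φ x u1 i := by
        simp only [Pi.add_apply]; ring
      rw [hba] at hdiag
      have hexppos : 0 < Real.exp (N * x) := Real.exp_pos _
      rw [← hN] at hdiag
      show (0:ℝ) ≤ Real.exp (N * x) * N * (Φ x u2 i - Φ x u1 i)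
        + Real.exp (N * x) * (grad r P.s (Φ x u1 + v0) i - grad r P.s (Φ x u2 + v0) i)
      nlinarith
  intro τ hτ0 hτt
  have hht0 : h t0 = 0 := by rw [hh]; simp [hzero]
  have hcomp := hmono (Set.mem_Icc.mpr ⟨hτ0, hτt⟩) (Set.mem_Icc.mpr ⟨ht0, le_refl t0⟩) hτt
  rw [hht0] at hcomp
  have hgτ : 0 ≤ Φ τ u2 i - Φ τ u1 i := by linarith [hwc τ hτ0 i]
  have hexppos : 0 < Real.exp (N * τ) := Real.exp_pos _
  have hcomp' : Real.exp (N * τ) * (Φ τ u2 i - Φ τ u1 i) ≤ 0 := hcomp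
  nlinarith

lemma zero_propagate (hΦ : IsFlow r P.s p v0 Φ) (hp : ∀ m, 1 ≤ p m)
    (h1 : Periodic p u1) (h2 : Periodic p u2) (hle : u1 ≤ u2)
    {t0 : ℝ} (ht0 : 0 < t0) {i k : Zn n} (hk1 : znorm (k - i) = 1)
    (hi : ∀ τ, 0 ≤ τ → τ ≤ t0 → Φ τ u1 i = Φ τ u2 i) :
    ∀ τ, 0 ≤ τ → τ ≤ t0 → Φ τ u1 k = Φ τ u2 k := by
  have hwc := weak_comparison hΦ hp h1 h2 hle
  have hmid : ∀ τ ∈ Set.Ioo (0:ℝ) t0, Φ τ u1 k = Φ τ u2 k := by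
    intro τ hτ
    have hder : HasDerivAt (fun σ => Φ σ u2 i - Φ σ u1 i)
        (grad r P.s (Φ τ u1 + v0) i - grad r P.s (Φ τ u2 + v0) i) τ :=
      (flow_deriv hΦ h1 h2 i hτ.1.le).hasDerivAt (Ici_mem_nhds hτ.1)
    have hev : (fun σ => Φ σ u2 i - Φ σ u1 i) =ᶠ[nhds τ] fun _ => (0:ℝ) := by
      refine Filter.eventuallyEq_of_mem (Ioo_mem_nhds hτ.1 hτ.2) (fun σ hσ => ?_)
      have := hi σ hσ.1.le hσ.2.le
      simp [this]
    have hder0 : HasDerivAt (fun σ => Φ σ u2 i - Φ σ u1 i) 0 τ :=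
      (hasDerivAt_const τ (0:ℝ)).congr_of_eventuallyEq hev
    have huniq : grad r P.s (Φ τ u1 + v0) i - grad r P.s (Φ τ u2 + v0) i = 0 :=
      hder.unique hder0
    by_contra hcc
    have hgk : (Φ τ u1 + v0) k < (Φ τ u2 + v0) k := by
      simp only [Pi.add_apply]
      rcases lt_or_eq_of_le (hwc τ hτ.1.le k) with h | h
      · linarith
      · exact absurd h hcc
    have hab : (Φ τ u1 + v0) ≤ (Φ τ u2 + v0) := fun m => by
      simp only [Pi.add_apply]
      linarith [hwc τ hτ.1.le m]
    have hai : (Φ τ u1 + v0) i = (Φ τ u2 + v0) i := by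
      simp only [Pi.add_apply]
      rw [hi τ hτ.1.le hτ.2.le]
    have := grad_strict_full P (r_pos P) hk1 (Φ τ u1 + v0) (Φ τ u2 + v0) hab hai hgk
    linarith
  intro τ hτ0 hτt
  have hne : (𝓝[Set.Ioo (0:ℝ) t0] τ).NeBot := by
    refine mem_closure_iff_nhdsWithin_neBot.mp ?_
    rw [closure_Ioo (ne_of_lt ht0)]
    exact ⟨hτ0, hτt⟩
  have hcw : ContinuousWithinAt (fun σ => Φ σ u2 k - Φ σ u1 k) (Set.Ioo 0 t0) τ :=
    ((flow_cont hΦ h1 h2 k) τ hτ0).mono (fun x hx => hx.1.le)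
  have ht2 : Filter.Tendsto (fun σ => Φ σ u2 k - Φ σ u1 k) (𝓝[Set.Ioo (0:ℝ) t0] τ)
      (𝓝 0) := by
    refine Filter.Tendsto.congr' (eventually_nhdsWithin_of_forall (fun σ hσ => ?_))
      tendsto_const_nhds
    show (0:ℝ) = Φ σ u2 k - Φ σ u1 k
    rw [hmid σ hσ]
    ring
  have heq0 : Φ τ u2 k - Φ τ u1 k = 0 := tendsto_nhds_unique hcw ht2
  linarith

end Flow2

lemma natAbs_sub_sign {x : ℤ} (hx : x ≠ 0) : (x - Int.sign x).natAbs = x.natAbs - 1 := by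
  rcases lt_trichotomy x 0 with h | h | h
  · rw [Int.sign_eq_neg_one_of_neg h]; omega
  · exact absurd h hx
  · rw [Int.sign_eq_one_of_pos h]; omega

lemma znorm_sign_unitv {x : ℤ} (hx : x ≠ 0) (m : Fin n) :
    znorm ((Int.sign x) • unitv m) = 1 := by
  rw [znorm]
  have h1 : ∀ j : Fin n, (((Int.sign x) • unitv m) j).natAbs = if j = m then 1 else 0 := by
    intro j
    show ((Int.sign x) * unitv m j).natAbs = _
    rw [unitv]
    split
    · simp [Int.natAbs_sign_of_ne_zero hx]
    · simp
  rw [Finset.sum_congr rfl (fun j _ => h1 j)]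
  simp [Finset.sum_ite_eq']

lemma znorm_sub_sign_step {v : Zn n} {m : Fin n} (h : v m ≠ 0) :
    znorm (v - (Int.sign (v m)) • unitv m) = znorm v - 1 := by
  classical
  rw [znorm, znorm]
  rw [← Finset.add_sum_erase _ _ (Finset.mem_univ m), ← Finset.add_sum_erase _
    (fun j => (v j).natAbs) (Finset.mem_univ m)]
  have hm : ((v - (Int.sign (v m)) • unitv m) m).natAbs = (v m).natAbs - 1 := by
    have : (v - (Int.sign (v m)) • unitv m) m = v m - Int.sign (v m) := by
      show v m - (Int.sign (v m)) * unitv m m = _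
      rw [unitv]
      simp
    rw [this, natAbs_sub_sign h]
  have hrest : ∀ j ∈ Finset.univ.erase m,
      ((v - (Int.sign (v m)) • unitv m) j).natAbs = (v j).natAbs := by
    intro j hj
    have hjm : j ≠ m := (Finset.mem_erase.mp hj).1
    have : (v - (Int.sign (v m)) • unitv m) j = v j := by
      show v j - (Int.sign (v m)) * unitv m j = _
      rw [unitv]
      simp [hjm]
    rw [this]
  rw [hm, Finset.sum_congr rfl hrest]
  have : 1 ≤ (v m).natAbs := by omega
  omega

/-- comparison principle for the semiflow: if `u₁ ≤ u₂` and `u₁ ≠ u₂` in `Λ_0^p`,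
then `Φ_t⁰(u₁)(i) < Φ_t⁰(u₂)(i)` for every `i ∈ ℤⁿ` and every `t > 0`. -/
theorem statement1 {n r : ℕ} (P : Setup n r) (v0 w0 : Zn n → ℝ)
    (hv0 : v0 ∈ M0 P.s) (hw0 : w0 ∈ M0 P.s) (hlt : ∀ i, v0 i < w0 i)
    (hadj : ∀ u ∈ M0 P.s, u ≠ v0 → u ≠ w0 → ¬(v0 ≤ u ∧ u ≤ w0))
    (p : Fin n → ℕ) (hp : ∀ m, 1 ≤ p m)
    (Φ : ℝ → (Zn n → ℝ) → (Zn n → ℝ)) (hΦ : IsFlow r P.s p v0 Φ)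
    (u1 u2 : Zn n → ℝ) (h1 : Periodic p u1) (h2 : Periodic p u2)
    (hle : u1 ≤ u2) (hne : u1 ≠ u2) :
    ∀ t : ℝ, 0 < t → ∀ i : Zn n, Φ t u1 i < Φ t u2 i := by
  intro t ht
  have hwc := weak_comparison hΦ hp h1 h2 hle
  by_contra hcon
  push_neg at hcon
  obtain ⟨i, hi⟩ := hcon
  have heqi : Φ t u1 i = Φ t u2 i := le_antisymm (hwc t ht.le i) hi
  have hbase := g_zero_on_past hΦ hp h1 h2 hle ht.le heqi
  have hall : ∀ d : ℕ, ∀ k, znorm (k - i) = d →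
      ∀ τ, 0 ≤ τ → τ ≤ t → Φ τ u1 k = Φ τ u2 k := by
    intro d
    induction d using Nat.strong_induction_on with
    | _ d ih =>
      intro k hk
      rcases Nat.eq_zero_or_pos d with h0 | hpos
      · subst h0
        have hki : k = i := by
          have h3 := znorm_eq_zero hk
          have h4 : k - i = 0 := h3
          funext m
          have := congrFun h4 m
          simpa [sub_eq_zero] using this
        rw [hki]
        exact hbase
      · have hex : ∃ m, (k - i) m ≠ 0 := by
          by_contra hc
          push_neg at hc
          have hzero : k - i = 0 := funext hc
          rw [hzero, znorm_zero] at hk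
          omega
        obtain ⟨m, hm⟩ := hex
        set k' : Zn n := k - (Int.sign ((k - i) m)) • unitv m with hk'
        have hstep1 : znorm (k' - i) = d - 1 := by
          have harg : k' - i = (k - i) - (Int.sign ((k - i) m)) • unitv m := by
            rw [hk']; abel
          rw [harg, znorm_sub_sign_step hm, hk]
        have hstep2 : znorm (k - k') = 1 := by
          have harg : k - k' = (Int.sign ((k - i) m)) • unitv m := by
            rw [hk']; abel
          rw [harg]
          exact znorm_sign_unitv hm m
        exact zero_propagate hΦ hp h1 h2 hle ht hstep2 (ih (d - 1) (by omega) k' hstep1)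
  refine hne (funext fun k => ?_)
  have hz := hall (znorm (k - i)) k rfl 0 le_rfl ht.le
  rwa [hΦ.2.1 u1, hΦ.2.1 u2] at hz
end

end FK
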